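/- arXiv:1604.04493 — 6 statements merged into one kernel-verified Lean document; each statement's English description precedes it below -/
import Mathlib

section
/- Let P be a polynomial of degree 2N-2 with conjugate-symmetric coefficients (a[-n] = conj(a[n])) such that P(e^{-iω}) e^{iω(N-1)} ≥ 0 for all real ω. Then every zero of P on the unit circle has even multiplicity. -/
/-!
Parametrize the unit circle near a root `γ` by `ω ↦ exp (-I ω)`, which has non-zero derivative.
Near the parameter `ω₀` of `γ`, the trigonometric polynomial `exp (I ω (N - 1)) P (exp (-I ω))` is
then `(ω - ω₀) ^ m` times a function that is continuous and non-zero at `ω₀`, where `m` is the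
multiplicity of `γ`. If `m` were odd, the sign of `(ω - ω₀) ^ m` would change at `ω₀`, so
non-negativity on both sides would force that function to vanish at `ω₀`.
-/

open Complex Polynomial Filter Topology

section OrderedModule

variable {E : Type*} [AddCommGroup E] [PartialOrder E] [IsOrderedAddMonoid E] [Module ℝ E]
  [IsOrderedModule ℝ E] [TopologicalSpace E] [OrderClosedTopology E]

theorem even_of_nonneg_of_eq_sub_pow_smul {f u : ℝ → E} {ω₀ : ℝ} {m : ℕ} (hf : ∀ ω, 0 ≤ f ω)
    (hfu : ∀ ω, f ω = (ω - ω₀) ^ m • u ω) (hu : ContinuousAt u ω₀) (hu₀ : u ω₀ ≠ 0) :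
    Even m := by
  by_contra hodd
  rw [Nat.not_even_iff_odd] at hodd
  have hu_eq : ∀ ω ≠ ω₀, u ω = ((ω - ω₀) ^ m)⁻¹ • f ω := fun ω hω => by
    rw [hfu, inv_smul_smul₀ (pow_ne_zero _ (sub_ne_zero.2 hω))]
  have hright : 0 ≤ u ω₀ := by
    refine ge_of_tendsto (hu.tendsto.mono_left (nhdsWithin_le_nhds (s := Set.Ioi ω₀))) ?_
    filter_upwards [self_mem_nhdsWithin] with ω (hω : ω₀ < ω)
    rw [hu_eq ω hω.ne']
    exact smul_nonneg (inv_nonneg.2 (pow_nonneg (sub_pos.2 hω).le _)) (hf ω)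
  have hleft : u ω₀ ≤ 0 := by
    refine le_of_tendsto (hu.tendsto.mono_left (nhdsWithin_le_nhds (s := Set.Iio ω₀))) ?_
    filter_upwards [self_mem_nhdsWithin] with ω (hω : ω < ω₀)
    rw [hu_eq ω hω.ne]
    exact smul_nonpos_of_nonpos_of_nonneg (inv_nonpos.2 (hodd.pow_neg (sub_neg.2 hω)).le) (hf ω)
  exact hu₀ (le_antisymm hleft hright)

end OrderedModule

theorem Polynomial.exists_eval_comp_eq_sub_pow_rootMultiplicity_smul {𝕜 K : Type*}
    [NontriviallyNormedField 𝕜] [NormedField K] [NormedAlgebra 𝕜 K] {P : K[X]} (hP : P ≠ 0)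
    {e : 𝕜 → K} {e' : K} {x₀ : 𝕜} (he : HasDerivAt e e' x₀) (he' : e' ≠ 0) :
    ∃ u : 𝕜 → K, ContinuousAt u x₀ ∧ u x₀ ≠ 0 ∧
      ∀ x, P.eval (e x) = (x - x₀) ^ P.rootMultiplicity (e x₀) • u x := by
  set m := P.rootMultiplicity (e x₀)
  set Q := P /ₘ (X - C (e x₀)) ^ m
  refine ⟨fun x => dslope e x₀ x ^ m * Q.eval (e x), ?_, ?_, fun x => ?_⟩
  · exact ((continuousAt_dslope_same.2 he.differentiableAt).pow m).mul
      (Q.continuousAt.comp he.continuousAt)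
  · simp only [dslope_same, he.deriv]
    exact mul_ne_zero (pow_ne_zero _ he') (eval_divByMonic_pow_rootMultiplicity_ne_zero _ hP)
  · conv_lhs => rw [← pow_mul_divByMonic_rootMultiplicity_eq P (e x₀)]
    rw [eval_mul, eval_pow, eval_sub, eval_X, eval_C, ← sub_smul_dslope, _root_.smul_pow, smul_mul_assoc]

theorem Complex.exists_exp_neg_I_mul_eq_of_norm_eq_one {γ : ℂ} (hγ : ‖γ‖ = 1) :
    ∃ ω : ℝ, exp (-I * ω) = γ := by
  refine ⟨-γ.arg, ?_⟩
  simpa [hγ, mul_comm] using norm_mul_exp_arg_mul_I γ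

open scoped ComplexOrder

theorem unit_circle_roots_even_multiplicity_general
    (N : ℕ)
    (P : Polynomial ℂ)
    (hpos : ∀ ω : ℝ,
      (Complex.exp (Complex.I * (ω : ℂ) * ((N : ℂ) - 1)) *
        P.eval (Complex.exp (-Complex.I * (ω : ℂ)))).im = 0 ∧
      0 ≤ (Complex.exp (Complex.I * (ω : ℂ) * ((N : ℂ) - 1)) *
        P.eval (Complex.exp (-Complex.I * (ω : ℂ)))).re) :
    ∀ γ : ℂ, ‖γ‖ = 1 → Even (P.rootMultiplicity γ) := by
  intro γ hγ
  rcases eq_or_ne P 0 with rfl | hP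
  · simp
  obtain ⟨ω₀, hω₀⟩ := exists_exp_neg_I_mul_eq_of_norm_eq_one hγ
  have he : HasDerivAt (fun ω : ℝ => exp (-I * ω)) (exp (-I * ω₀) * (-I * 1)) ω₀ :=
    ((hasDerivAt_id (ω₀ : ℂ)).const_mul (-I)).cexp.comp_ofReal
  obtain ⟨u, hu, hu₀, hPu⟩ :=
    exists_eval_comp_eq_sub_pow_rootMultiplicity_smul hP he (by simp [exp_ne_zero])
  simp only [hω₀] at hPu
  refine even_of_nonneg_of_eq_sub_pow_smul (ω₀ := ω₀)
    (u := fun ω => exp (I * ω * (N - 1)) * u ω)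
    (fun ω => nonneg_iff.2 ⟨(hpos ω).2, (hpos ω).1.symm⟩) (fun ω => ?_) ?_ ?_
  · rw [hPu, mul_smul_comm]
  · exact (by fun_prop : Continuous fun ω : ℝ => exp (I * ω * (N - 1))).continuousAt.mul hu
  · exact mul_ne_zero (exp_ne_zero _) hu₀

theorem unit_circle_roots_even_multiplicity
    (N : ℕ) (hN : 1 ≤ N) (a : ℤ → ℂ)
    (hsymm : ∀ n : ℤ, a (-n) = (starRingEnd ℂ) (a n))
    (hlead : a ((N : ℤ) - 1) ≠ 0)
    (P : Polynomial ℂ)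
    (hP : P = ∑ n ∈ Finset.range (2 * N - 1),
      Polynomial.C (a ((n : ℤ) - (N : ℤ) + 1)) * Polynomial.X ^ n)
    (hpos : ∀ ω : ℝ,
      (Complex.exp (Complex.I * (ω : ℂ) * ((N : ℂ) - 1)) *
        P.eval (Complex.exp (-Complex.I * (ω : ℂ)))).im = 0 ∧
      0 ≤ (Complex.exp (Complex.I * (ω : ℂ) * ((N : ℂ) - 1)) *
        P.eval (Complex.exp (-Complex.I * (ω : ℂ)))).re) :
    ∀ γ : ℂ, ‖γ‖ = 1 → Even (P.rootMultiplicity γ) :=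
  unit_circle_roots_even_multiplicity_general N P hpos
end

section
/- Let x and y be signals with support {0,…,N-1} given by 𝓕x(ω) = C ∏_{j=1}^{N-1}(e^{-iω} - β_j) and 𝓕y(ω) = C' ∏_{j=1}^{N-1}(e^{-iω} - β'_j), where for each j, β'_j ∈ {β_j, 1/conj(β_j)}, all β_j ≠ 0, and C' is normalized so that |C'|² ∏_j |β'_j| = |C|² ∏_j |β_j|. Then |𝓕x(ω)| = |𝓕y(ω)| for all ω ∈ ℝ. -/
open Complex

lemma key_factor (z b : ℂ) (hz : ‖z‖ = 1) (hb : b ≠ 0) :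
    (‖z - 1 / (starRingEnd ℂ) b‖) ^ 2 * ‖b‖
      = (‖z - b‖) ^ 2 * ‖1 / (starRingEnd ℂ) b‖ := by
  have hcb : (starRingEnd ℂ) b ≠ 0 := by simpa using hb
  have hb0 : ‖b‖ ≠ 0 := by simpa using hb
  have hzz : z * (starRingEnd ℂ) z = 1 := by
    rw [Complex.mul_conj]
    norm_cast
    simp [Complex.normSq_eq_norm_sq, hz]
  have h1 : z - 1 / (starRingEnd ℂ) b = (z * (starRingEnd ℂ) b - 1) / (starRingEnd ℂ) b := by
    field_simp
  have h2 : z * ((starRingEnd ℂ) z * b - 1) = b - z := by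
    rw [mul_sub, ← mul_assoc, hzz]; ring
  have h3 : ‖z * (starRingEnd ℂ) b - 1‖ = ‖z - b‖ := by
    have hc : (starRingEnd ℂ) (z * (starRingEnd ℂ) b - 1) = (starRingEnd ℂ) z * b - 1 := by
      simp [map_sub, map_mul]
    calc ‖z * (starRingEnd ℂ) b - 1‖
        = ‖(starRingEnd ℂ) (z * (starRingEnd ℂ) b - 1)‖ := (Complex.norm_conj _).symm
      _ = ‖(starRingEnd ℂ) z * b - 1‖ := by rw [hc]
      _ = ‖z‖ * ‖(starRingEnd ℂ) z * b - 1‖ := by rw [hz, one_mul]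
      _ = ‖z * ((starRingEnd ℂ) z * b - 1)‖ := (norm_mul _ _).symm
      _ = ‖b - z‖ := by rw [h2]
      _ = ‖z - b‖ := norm_sub_rev b z
  have habs : ‖z - 1 / (starRingEnd ℂ) b‖
      = ‖z - b‖ / ‖b‖ := by
    rw [h1, norm_div, h3, Complex.norm_conj]
  rw [habs, norm_div, norm_one, Complex.norm_conj]
  field_simp

theorem reflecting_zeros_preserves_intensity
    (N : ℕ) (hN : 1 ≤ N) (x y : ℤ → ℂ)
    (hxsupp : ∀ n : ℤ, (n < 0 ∨ (N : ℤ) ≤ n) → x n = 0)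
    (hysupp : ∀ n : ℤ, (n < 0 ∨ (N : ℤ) ≤ n) → y n = 0)
    (C C' : ℂ) (β β' : ℕ → ℂ)
    (hβ : ∀ j < N - 1, β j ≠ 0)
    (hchoice : ∀ j < N - 1, β' j = β j ∨ β' j = 1 / (starRingEnd ℂ) (β j))
    (hnorm : ‖C'‖ ^ 2 * ∏ j ∈ Finset.range (N - 1), ‖β' j‖
           = ‖C‖ ^ 2 * ∏ j ∈ Finset.range (N - 1), ‖β j‖)
    (hx : ∀ ω : ℝ,
      ∑ n ∈ Finset.range N, x n * Complex.exp (-Complex.I * (ω : ℂ) * (n : ℂ))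
        = C * ∏ j ∈ Finset.range (N - 1), (Complex.exp (-Complex.I * (ω : ℂ)) - β j))
    (hy : ∀ ω : ℝ,
      ∑ n ∈ Finset.range N, y n * Complex.exp (-Complex.I * (ω : ℂ) * (n : ℂ))
        = C' * ∏ j ∈ Finset.range (N - 1), (Complex.exp (-Complex.I * (ω : ℂ)) - β' j)) :
    ∀ ω : ℝ,
      ‖∑ n ∈ Finset.range N, x n * Complex.exp (-Complex.I * (ω : ℂ) * (n : ℂ))‖
        = ‖∑ n ∈ Finset.range N, y n * Complex.exp (-Complex.I * (ω : ℂ) * (n : ℂ))‖ := by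
  intro ω
  rw [hx ω, hy ω]
  set z := Complex.exp (-Complex.I * (ω : ℂ)) with hzdef
  have hz : ‖z‖ = 1 := by
    rw [hzdef, Complex.norm_exp]
    simp
  have hP : ∏ j ∈ Finset.range (N - 1), ‖β j‖ ≠ 0 := by
    apply Finset.prod_ne_zero_iff.mpr
    intro j hj
    simpa using hβ j (Finset.mem_range.mp hj)
  have hfac : ∀ j ∈ Finset.range (N - 1),
      (‖z - β' j‖) ^ 2 * ‖β j‖
        = (‖z - β j‖) ^ 2 * ‖β' j‖ := by
    intro j hj
    rcases hchoice j (Finset.mem_range.mp hj) with h | h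
    · rw [h]
    · rw [h]; exact key_factor z (β j) hz (hβ j (Finset.mem_range.mp hj))
  have hprod : (∏ j ∈ Finset.range (N - 1), (‖z - β' j‖) ^ 2)
        * (∏ j ∈ Finset.range (N - 1), ‖β j‖)
      = (∏ j ∈ Finset.range (N - 1), (‖z - β j‖) ^ 2)
        * (∏ j ∈ Finset.range (N - 1), ‖β' j‖) := by
    rw [← Finset.prod_mul_distrib, ← Finset.prod_mul_distrib]
    exact Finset.prod_congr rfl hfac
  have hsq : (‖C * ∏ j ∈ Finset.range (N - 1), (z - β j)‖) ^ 2
      = (‖C' * ∏ j ∈ Finset.range (N - 1), (z - β' j)‖) ^ 2 := by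
    rw [norm_mul, norm_mul, norm_prod, norm_prod, mul_pow, mul_pow,
      ← Finset.prod_pow, ← Finset.prod_pow]
    apply mul_right_cancel₀ hP
    linear_combination -(‖C'‖ ^ 2 * hprod)
      - (∏ j ∈ Finset.range (N - 1), (‖z - β j‖) ^ 2) * hnorm
  rw [← Real.sqrt_sq (norm_nonneg (C * ∏ j ∈ Finset.range (N - 1), (z - β j))),
    ← Real.sqrt_sq (norm_nonneg (C' * ∏ j ∈ Finset.range (N - 1), (z - β' j))), hsq]
end

section
/- Let x be a signal with support {0,…,N-1} and 𝓕x(ω) = C ∏_{j=1}^{N-1}(e^{-iω} - β_j), all β_j ≠ 0. Then the conjugated and reflected signal y[n] = conj(x[N-1-n]) (shifted to have support {0,…,N-1}) satisfies 𝓕y(ω) = C' ∏_{j=1}^{N-1}(e^{-iω} - 1/conj(β_j)) for some constant C' with |C'|² ∏_j |1/conj(β_j)| = |C|² ∏_j |β_j|. -/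
open Complex

/-!
On the unit circle `conj z = z⁻¹`, so conjugating and reflecting the coefficients of a polynomial
`p` of degree `< N` gives the polynomial `z ^ (N - 1) * conj (p z)`. Distributing `z ^ (N - 1)`
over the `N - 1` factors of `conj (C * ∏ (z - β j))`, each factor becomes
`z * (z⁻¹ - conj β) = -conj β * (z - 1 / conj β)`. Hence `C' = conj C * ∏ (-conj β j)`, and
`‖C'‖ = ‖C‖ * ∏ ‖β j‖` gives the energy identity.
-/

section

open Finset

theorem sum_conj_reflect_mul_pow {𝕜 : Type*} [RCLike 𝕜] (N : ℕ) (a : ℕ → 𝕜) {z : 𝕜}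
    (hz : ‖z‖ = 1) :
    ∑ n ∈ range N, starRingEnd 𝕜 (a (N - 1 - n)) * z ^ n
      = z ^ (N - 1) * starRingEnd 𝕜 (∑ n ∈ range N, a n * z ^ n) := by
  have hz0 : z ≠ 0 := norm_ne_zero_iff.mp (by simp [hz])
  rw [← sum_range_reflect, map_sum, mul_sum]
  refine sum_congr rfl fun n hn => ?_
  have hn : n ≤ N - 1 := Nat.le_sub_one_of_lt (mem_range.mp hn)
  rw [Nat.sub_sub_self hn, map_mul, map_pow, ← RCLike.inv_eq_conj hz, pow_sub₀ z hz0 hn, inv_pow]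
  ring

theorem mul_inv_sub_eq_neg_mul_sub_inv {K : Type*} [Field K] {z c : K} (hz : z ≠ 0)
    (hc : c ≠ 0) : z * (z⁻¹ - c) = -c * (z - c⁻¹) := by
  field_simp
  ring

theorem pow_card_mul_conj_prod_sub {𝕜 ι : Type*} [RCLike 𝕜] (s : Finset ι) {β : ι → 𝕜}
    (hβ : ∀ j ∈ s, β j ≠ 0) {z : 𝕜} (hz : ‖z‖ = 1) :
    z ^ #s * starRingEnd 𝕜 (∏ j ∈ s, (z - β j))
      = (∏ j ∈ s, -starRingEnd 𝕜 (β j)) * ∏ j ∈ s, (z - 1 / starRingEnd 𝕜 (β j)) := by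
  have hz0 : z ≠ 0 := norm_ne_zero_iff.mp (by simp [hz])
  rw [← prod_const, map_prod, ← prod_mul_distrib, ← prod_mul_distrib]
  refine prod_congr rfl fun j hj => ?_
  rw [map_sub, ← RCLike.inv_eq_conj hz, one_div]
  exact mul_inv_sub_eq_neg_mul_sub_inv hz0 (by simpa using hβ j hj)

theorem norm_exp_neg_I_mul_ofReal (ω : ℝ) : ‖exp (-I * ω)‖ = 1 := by
  rw [show -I * ω = ((-ω : ℝ) : ℂ) * I by push_cast; ring]
  exact norm_exp_ofReal_mul_I _

theorem exp_neg_I_mul_ofReal_mul_natCast (ω : ℝ) (n : ℕ) :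
    exp (-I * ω * n) = exp (-I * ω) ^ n := by
  rw [← exp_nat_mul, mul_comm]

theorem norm_sq_mul_prod_norm_one_div_conj {𝕜 ι : Type*} [RCLike 𝕜] (s : Finset ι) (C : 𝕜)
    {β : ι → 𝕜} (hβ : ∀ j ∈ s, β j ≠ 0) :
    ‖starRingEnd 𝕜 C * ∏ j ∈ s, -starRingEnd 𝕜 (β j)‖ ^ 2
        * ∏ j ∈ s, ‖1 / starRingEnd 𝕜 (β j)‖
      = ‖C‖ ^ 2 * ∏ j ∈ s, ‖β j‖ := by
  have hP : ∏ j ∈ s, ‖β j‖ ≠ 0 := prod_ne_zero_iff.mpr fun j hj => norm_ne_zero_iff.mpr (hβ j hj)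
  simp only [norm_mul, norm_prod, norm_neg, RCLike.norm_conj, one_div, norm_inv,
    prod_inv_distrib]
  field_simp

end

theorem conj_reflected_signal_zeros_general
    (N : ℕ) (x : ℤ → ℂ)
    (C : ℂ) (β : ℕ → ℂ) (hβ : ∀ j < N - 1, β j ≠ 0)
    (hx : ∀ ω : ℝ,
      ∑ n ∈ Finset.range N, x n * Complex.exp (-Complex.I * (ω : ℂ) * (n : ℂ))
        = C * ∏ j ∈ Finset.range (N - 1), (Complex.exp (-Complex.I * (ω : ℂ)) - β j))
    (y : ℤ → ℂ) (hy : ∀ n : ℤ, y n = (starRingEnd ℂ) (x ((N : ℤ) - 1 - n))) :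
    ∃ C' : ℂ,
      (∀ ω : ℝ,
        ∑ n ∈ Finset.range N, y n * Complex.exp (-Complex.I * (ω : ℂ) * (n : ℂ))
          = C' * ∏ j ∈ Finset.range (N - 1),
              (Complex.exp (-Complex.I * (ω : ℂ)) - 1 / (starRingEnd ℂ) (β j))) ∧
      ‖C'‖ ^ 2 *
          ∏ j ∈ Finset.range (N - 1), ‖1 / (starRingEnd ℂ) (β j)‖
        = ‖C‖ ^ 2 * ∏ j ∈ Finset.range (N - 1), ‖β j‖ := by
  have hβ' : ∀ j ∈ Finset.range (N - 1), β j ≠ 0 := fun j hj => hβ j (Finset.mem_range.mp hj)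
  refine ⟨starRingEnd ℂ C * ∏ j ∈ Finset.range (N - 1), -starRingEnd ℂ (β j), fun ω => ?_,
    norm_sq_mul_prod_norm_one_div_conj _ C hβ'⟩
  have hz := norm_exp_neg_I_mul_ofReal ω
  have hfactor := pow_card_mul_conj_prod_sub _ hβ' hz
  rw [Finset.card_range] at hfactor
  simp_rw [exp_neg_I_mul_ofReal_mul_natCast] at hx ⊢
  calc ∑ n ∈ Finset.range N, y n * exp (-I * ω) ^ n
      = ∑ n ∈ Finset.range N, starRingEnd ℂ (x ↑(N - 1 - n)) * exp (-I * ω) ^ n := by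
        refine Finset.sum_congr rfl fun n hn => ?_
        have hn : n < N := Finset.mem_range.mp hn
        rw [hy, show (N : ℤ) - 1 - n = ((N - 1 - n : ℕ) : ℤ) by omega]
    _ = exp (-I * ω) ^ (N - 1) *
          starRingEnd ℂ (C * ∏ j ∈ Finset.range (N - 1), (exp (-I * ω) - β j)) := by
        rw [sum_conj_reflect_mul_pow N (fun n => x n) hz, hx]
    _ = _ := by rw [map_mul, mul_left_comm, hfactor, mul_assoc]

theorem conj_reflected_signal_zeros
    (N : ℕ) (hN : 1 ≤ N) (x : ℤ → ℂ)
    (hsupp : ∀ n : ℤ, (n < 0 ∨ (N : ℤ) ≤ n) → x n = 0)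
    (C : ℂ) (hC : C ≠ 0) (β : ℕ → ℂ) (hβ : ∀ j < N - 1, β j ≠ 0)
    (hx : ∀ ω : ℝ,
      ∑ n ∈ Finset.range N, x n * Complex.exp (-Complex.I * (ω : ℂ) * (n : ℂ))
        = C * ∏ j ∈ Finset.range (N - 1), (Complex.exp (-Complex.I * (ω : ℂ)) - β j))
    (y : ℤ → ℂ) (hy : ∀ n : ℤ, y n = (starRingEnd ℂ) (x ((N : ℤ) - 1 - n))) :
    ∃ C' : ℂ,
      (∀ ω : ℝ,
        ∑ n ∈ Finset.range N, y n * Complex.exp (-Complex.I * (ω : ℂ) * (n : ℂ))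
          = C' * ∏ j ∈ Finset.range (N - 1),
              (Complex.exp (-Complex.I * (ω : ℂ)) - 1 / (starRingEnd ℂ) (β j))) ∧
      ‖C'‖ ^ 2 *
          ∏ j ∈ Finset.range (N - 1), ‖1 / (starRingEnd ℂ) (β j)‖
        = ‖C‖ ^ 2 * ∏ j ∈ Finset.range (N - 1), ‖β j‖ :=
  conj_reflected_signal_zeros_general N x C β hβ hx y hy
end

section
/- Let N ≥ 2 and let x be a signal with support {0,…,N-1} whose corresponding zeros β_1,…,β_{N-1} (in 𝓕x(ω) = C ∏_j (e^{-iω} - β_j)) all lie on the unit circle, |β_j| = 1. If y is any signal with support {0,…,N-1} and |𝓕y(ω)| = |𝓕x(ω)| for all ω, then y[n] = e^{iα} x[n] for some α ∈ ℝ, i.e., the phase retrieval problem is unique up to rotation. -/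
/-!
Let `P`, `Q` be the polynomials with coefficients `x`, `y`, so that `𝓕x(ω) = P(e^{-iω})`, and
let `p^*(z) = z^d · conj (p (1 / conj z))` be the conjugate reflection of a polynomial of degree
at most `d = deg P`. On the unit circle `p^*(z) = z^d · conj (p z)`, so `|Q| = |P|` there becomes
the polynomial identity `Q Q^* = P P^*`.

A polynomial whose roots all lie on the unit circle is a scalar multiple of its conjugate
reflection, because `z · conj (z - β) = -conj β · (z - β)` when `|z| = |β| = 1`. Hence
`P^* = e P`, every root of `Q` is a root of `P` and so lies on the circle, and comparing constant
terms gives `deg Q = d`, so that `Q^* = e' Q` as well. Then `Q² = (e / e') P²`, whence `Q = c P`,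
and `|c| = 1` because `|Q| = |P|` on the circle.
-/

open Complex Polynomial ComplexConjugate

theorem Complex.infinite_setOf_norm_eq_one : {z : ℂ | ‖z‖ = 1}.Infinite := by
  have : Infinite Circle :=
    Circle.argEquiv.infinite_iff.mpr (Set.Ioc_infinite (by linarith [Real.pi_pos])).to_subtype
  convert Set.infinite_range_of_injective (α := Circle) Circle.coe_injective
  ext z
  exact ⟨fun h => ⟨⟨z, mem_sphere_zero_iff_norm.2 h⟩, rfl⟩,
    by rintro ⟨w, rfl⟩; exact Circle.norm_coe w⟩

theorem Complex.forall_norm_eq_one_of_forall_exp_neg_I_mul {P : ℂ → Prop}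
    (h : ∀ ω : ℝ, P (exp (-I * ω))) (z : ℂ) (hz : ‖z‖ = 1) : P z := by
  have hexp : exp (-I * ↑(-arg z)) = z := by
    simpa [hz, mul_comm] using norm_mul_exp_arg_mul_I z
  exact hexp ▸ h (-arg z)

theorem Complex.exp_I_mul_arg {c : ℂ} (hc : ‖c‖ = 1) : exp (I * arg c) = c := by
  simpa [hc, mul_comm] using norm_mul_exp_arg_mul_I c

theorem Complex.mul_conj_sub_eq {z r : ℂ} (hz : ‖z‖ = 1) (hr : ‖r‖ = 1) :
    z * conj (z - r) = -conj r * (z - r) := by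
  have hz' : z * conj z = 1 := by simp [mul_conj, normSq_eq_norm_sq, hz]
  have hr' : conj r * r = 1 := by simp [conj_mul', hr]
  rw [map_sub]
  linear_combination hz' - hr'

namespace Polynomial

theorem roots_finset_prod_X_sub_C {ι : Type*} (s : Finset ι) (β : ι → ℂ) :
    (∏ j ∈ s, (X - C (β j))).roots = s.val.map β := by
  rw [Finset.prod_eq_multiset_prod, ← roots_multiset_prod_X_sub_C (s.val.map β),
    Multiset.map_map]
  rfl

theorem eq_of_eval_eq_of_norm_eq_one {p q : ℂ[X]}
    (h : ∀ z : ℂ, ‖z‖ = 1 → p.eval z = q.eval z) : p = q :=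
  eq_of_infinite_eval_eq p q (Complex.infinite_setOf_norm_eq_one.mono fun z hz => h z hz)

theorem exists_norm_eq_one_eval_ne_zero {p : ℂ[X]} (hp : p ≠ 0) :
    ∃ z : ℂ, ‖z‖ = 1 ∧ p.eval z ≠ 0 := by
  by_contra! h
  exact hp (eq_of_eval_eq_of_norm_eq_one fun z hz => by simpa using h z hz)

noncomputable def conjReflect (d : ℕ) (p : ℂ[X]) : ℂ[X] := (reflect d p).map (starRingEnd ℂ)

theorem coeff_zero_conjReflect (d : ℕ) (p : ℂ[X]) :
    (conjReflect d p).coeff 0 = conj (p.coeff d) := by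
  simp [conjReflect, coeff_reflect]

theorem eval_conjReflect {d : ℕ} {p : ℂ[X]} (hp : p.natDegree ≤ d) {z : ℂ}
    (hz : ‖z‖ = 1) :
    (conjReflect d p).eval z = z ^ d * conj (p.eval z) := by
  have hz0 : conj z ≠ 0 := by simp [← norm_ne_zero_iff, hz]
  let := invertibleOfNonzero hz0
  have hreflect := eval₂_reflect_mul_pow (starRingEnd ℂ) (conj z) d p hp
  rw [invOf_eq_inv, ← map_inv₀, inv_eq_conj hz, conj_conj] at hreflect
  have hzd : z ^ d * conj z ^ d = 1 := by
    rw [← mul_pow, mul_conj, normSq_eq_norm_sq, hz]; norm_num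
  rw [conjReflect, eval_map, eval, hom_eval₂, RingHom.comp_id, ← hreflect]
  linear_combination (-eval₂ (starRingEnd ℂ) z (reflect d p)) * hzd

theorem mul_conjReflect_eq_of_norm_eval_eq {d : ℕ} {p q : ℂ[X]} (hp : p.natDegree ≤ d)
    (hq : q.natDegree ≤ d) (h : ∀ z : ℂ, ‖z‖ = 1 → ‖q.eval z‖ = ‖p.eval z‖) :
    q * conjReflect d q = p * conjReflect d p := by
  refine eq_of_eval_eq_of_norm_eq_one fun z hz => ?_
  simp only [eval_mul, eval_conjReflect hp hz, eval_conjReflect hq hz, mul_left_comm _ (z ^ d),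
    mul_conj, normSq_eq_norm_sq, h z hz]

theorem exists_conjReflect_eq_C_mul {p : ℂ[X]} (hp : p ≠ 0)
    (hroots : ∀ r ∈ p.roots, ‖r‖ = 1) :
    ∃ e ≠ 0, conjReflect p.natDegree p = C e * p := by
  set a := p.leadingCoeff
  have ha : a ≠ 0 := leadingCoeff_ne_zero.2 hp
  have hfac : C a * (p.roots.map fun r => X - C r).prod = p :=
    C_leadingCoeff_mul_prod_multiset_X_sub_C IsAlgClosed.card_roots_eq_natDegree
  refine ⟨conj a * (p.roots.map fun r => -conj r).prod / a, ?_, ?_⟩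
  · refine div_ne_zero (mul_ne_zero (by simpa using ha) (Multiset.prod_ne_zero ?_)) ha
    intro h0
    obtain ⟨r, hr, hr0⟩ := Multiset.mem_map.1 h0
    have := hroots r hr
    rw [neg_eq_zero, map_eq_zero] at hr0
    simp [hr0] at this
  refine eq_of_eval_eq_of_norm_eq_one fun z hz => ?_
  have hevalp : p.eval z = a * (p.roots.map fun r => z - r).prod := by
    conv_lhs => rw [← hfac]
    simp [eval_multiset_prod, Multiset.map_map]
  have hzd : z ^ p.natDegree = (p.roots.map fun _ => z).prod := by
    simp [IsAlgClosed.card_roots_eq_natDegree]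
  rw [eval_conjReflect le_rfl hz, eval_mul, eval_C, hevalp, hzd, map_mul, map_multiset_prod,
    Multiset.map_map]
  have hfactors : (p.roots.map fun _ => z).prod * (p.roots.map (conj ∘ fun r => z - r)).prod =
      (p.roots.map fun r => -conj r).prod * (p.roots.map fun r => z - r).prod := by
    rw [← Multiset.prod_map_mul, ← Multiset.prod_map_mul]
    exact congrArg _ (Multiset.map_congr rfl fun r hr => mul_conj_sub_eq hz (hroots r hr))
  field_simp
  linear_combination conj a * hfactors

theorem exists_eq_C_mul_of_sq_eq_C_mul_sq {K : Type*} [Field K] [IsAlgClosed K] {p q : K[X]}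
    {k : K} (h : q ^ 2 = C k * p ^ 2) : ∃ c : K, q = C c * p := by
  obtain ⟨c, rfl⟩ := IsAlgClosed.exists_pow_nat_eq k two_pos
  rw [C_pow] at h
  have hsq : q * q = (C c * p) * (C c * p) := by linear_combination h
  rcases mul_self_eq_mul_self_iff.1 hsq with hq | hq
  · exact ⟨c, hq⟩
  · exact ⟨-c, by rw [hq, C_neg, neg_mul]⟩

theorem exists_norm_eq_one_eq_C_mul_of_norm_eval_eq {p q : ℂ[X]} (hp : p ≠ 0)
    (hroots : ∀ r ∈ p.roots, ‖r‖ = 1) (hq : q.natDegree ≤ p.natDegree)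
    (h : ∀ z : ℂ, ‖z‖ = 1 → ‖q.eval z‖ = ‖p.eval z‖) :
    ∃ c : ℂ, ‖c‖ = 1 ∧ q = C c * p := by
  have hqq := mul_conjReflect_eq_of_norm_eval_eq le_rfl hq h
  have hp0 : p.coeff 0 ≠ 0 := by
    rw [coeff_zero_eq_eval_zero]
    intro h0
    simpa using hroots 0 ((mem_roots hp).2 h0)
  have hqd : q.coeff p.natDegree ≠ 0 := by
    have h0 := congrArg (coeff · 0) hqq
    simp only [mul_coeff_zero, coeff_zero_conjReflect] at h0
    intro hqd
    simp [hqd, hp0, hp] at h0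
  have hq0 : q ≠ 0 := fun h0 => hqd (by simp [h0])
  have hqdeg : q.natDegree = p.natDegree := natDegree_eq_of_le_of_coeff_ne_zero hq hqd
  obtain ⟨e, he, hpe⟩ := exists_conjReflect_eq_C_mul hp hroots
  rw [hpe] at hqq
  have hqroots : ∀ r ∈ q.roots, ‖r‖ = 1 := by
    intro r hr
    refine hroots r ((mem_roots hp).2 ?_)
    have hr0 := congrArg (eval r) hqq
    rw [eval_mul, eval_mul, eval_mul, eval_C, (mem_roots hq0).1 hr, zero_mul] at hr0
    simpa [he] using hr0.symm
  obtain ⟨e', he', hqe⟩ := exists_conjReflect_eq_C_mul hq0 hqroots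
  rw [← hqdeg, hqe] at hqq
  obtain ⟨c, rfl⟩ := exists_eq_C_mul_of_sq_eq_C_mul_sq (k := e / e') (p := p) (q := q) (by
    have he'inv : C e'⁻¹ * C e' = 1 := by rw [← C_mul, inv_mul_cancel₀ he', C_1]
    rw [div_eq_mul_inv, C_mul]
    linear_combination C e'⁻¹ * hqq - q ^ 2 * he'inv)
  refine ⟨c, ?_, rfl⟩
  obtain ⟨z, hz, hpz⟩ := exists_norm_eq_one_eval_ne_zero hp
  have hnorm := h z hz
  rw [eval_mul, eval_C, norm_mul] at hnorm
  simpa [hpz] using hnorm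

end Polynomial

noncomputable def signalPoly (N : ℕ) (x : ℤ → ℂ) : ℂ[X] :=
  ∑ n ∈ Finset.range N, C (x n) * X ^ n

theorem eval_exp_signalPoly (N : ℕ) (x : ℤ → ℂ) (ω : ℝ) :
    (signalPoly N x).eval (exp (-I * ω)) = ∑ n ∈ Finset.range N, x n * exp (-I * ω * n) := by
  rw [signalPoly, eval_finsetSum]
  refine Finset.sum_congr rfl fun n _ => ?_
  rw [eval_mul, eval_C, eval_pow, eval_X, ← exp_nat_mul, mul_comm (n : ℂ)]

theorem natDegree_signalPoly_le (N : ℕ) (x : ℤ → ℂ) :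
    (signalPoly N x).natDegree ≤ N - 1 :=
  natDegree_sum_le_of_forall_le _ _ fun n hn =>
    (natDegree_C_mul_X_pow_le _ _).trans (by have := Finset.mem_range.1 hn; omega)

theorem coeff_signalPoly (N : ℕ) (x : ℤ → ℂ) (m : ℕ) :
    (signalPoly N x).coeff m = if m < N then x m else 0 := by
  simp [signalPoly, coeff_X_pow]

theorem eq_mul_of_signalPoly_eq_C_mul {N : ℕ} {x y : ℤ → ℂ}
    (hx : ∀ n : ℤ, (n < 0 ∨ (N : ℤ) ≤ n) → x n = 0)
    (hy : ∀ n : ℤ, (n < 0 ∨ (N : ℤ) ≤ n) → y n = 0)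
    {c : ℂ} (h : signalPoly N y = C c * signalPoly N x) (n : ℤ) : y n = c * x n := by
  by_cases hn : n < 0 ∨ (N : ℤ) ≤ n
  · rw [hx n hn, hy n hn, mul_zero]
  obtain ⟨m, rfl⟩ := Int.eq_ofNat_of_zero_le (by omega : 0 ≤ n)
  have hm := congrArg (coeff · m) h
  simpa [coeff_signalPoly, show m < N by omega] using hm

theorem unique_up_to_rotation_of_unimodular_zeros_general
    (N : ℕ) (x : ℤ → ℂ)
    (hxsupp : ∀ n : ℤ, (n < 0 ∨ (N : ℤ) ≤ n) → x n = 0)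
    (C : ℂ) (hC : C ≠ 0) (β : ℕ → ℂ) (hβ : ∀ j < N - 1, ‖β j‖ = 1)
    (hfact : ∀ ω : ℝ,
      ∑ n ∈ Finset.range N, x n * Complex.exp (-Complex.I * (ω : ℂ) * (n : ℂ))
        = C * ∏ j ∈ Finset.range (N - 1), (Complex.exp (-Complex.I * (ω : ℂ)) - β j))
    (y : ℤ → ℂ)
    (hysupp : ∀ n : ℤ, (n < 0 ∨ (N : ℤ) ≤ n) → y n = 0)
    (hint : ∀ ω : ℝ,
      ‖∑ n ∈ Finset.range N, y n * Complex.exp (-Complex.I * (ω : ℂ) * (n : ℂ))‖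
        = ‖∑ n ∈ Finset.range N, x n * Complex.exp (-Complex.I * (ω : ℂ) * (n : ℂ))‖) :
    ∃ α : ℝ, ∀ n : ℤ, y n = Complex.exp (Complex.I * (α : ℂ)) * x n := by
  set D := ∏ j ∈ Finset.range (N - 1), (X - Polynomial.C (β j))
  have hD : D.Monic := monic_prod_of_monic _ _ fun j _ => monic_X_sub_C (β j)
  have hP : signalPoly N x = Polynomial.C C * D :=
    eq_of_eval_eq_of_norm_eq_one <| forall_norm_eq_one_of_forall_exp_neg_I_mul fun ω => by
      rw [eval_exp_signalPoly, hfact, eval_mul, eval_C, eval_prod]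
      simp
  have hP0 : signalPoly N x ≠ 0 := hP ▸ mul_ne_zero (C_ne_zero.2 hC) hD.ne_zero
  have hroots : ∀ r ∈ (signalPoly N x).roots, ‖r‖ = 1 := by
    rw [hP, roots_C_mul _ hC, roots_finset_prod_X_sub_C]
    intro r hr
    obtain ⟨j, hj, rfl⟩ := Multiset.mem_map.1 hr
    exact hβ j (Finset.mem_range.1 hj)
  have hdeg : (signalPoly N y).natDegree ≤ (signalPoly N x).natDegree := by
    rw [hP, natDegree_C_mul hC, natDegree_prod_of_monic _ _ fun j _ => monic_X_sub_C (β j)]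
    simpa using natDegree_signalPoly_le N y
  have hnorm :
      ∀ z : ℂ, ‖z‖ = 1 → ‖(signalPoly N y).eval z‖ = ‖(signalPoly N x).eval z‖ :=
    forall_norm_eq_one_of_forall_exp_neg_I_mul fun ω => by
      rw [eval_exp_signalPoly, eval_exp_signalPoly]
      exact hint ω
  obtain ⟨c, hc, hyx⟩ := exists_norm_eq_one_eq_C_mul_of_norm_eval_eq hP0 hroots hdeg hnorm
  refine ⟨arg c, fun n => ?_⟩
  rw [exp_I_mul_arg hc]
  exact eq_mul_of_signalPoly_eq_C_mul hxsupp hysupp hyx n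

theorem unique_up_to_rotation_of_unimodular_zeros
    (N : ℕ) (hN : 2 ≤ N) (x : ℤ → ℂ)
    (hxsupp : ∀ n : ℤ, (n < 0 ∨ (N : ℤ) ≤ n) → x n = 0)
    (hx0 : x 0 ≠ 0) (hxN : x ((N : ℤ) - 1) ≠ 0)
    (C : ℂ) (hC : C ≠ 0) (β : ℕ → ℂ) (hβ : ∀ j < N - 1, ‖β j‖ = 1)
    (hfact : ∀ ω : ℝ,
      ∑ n ∈ Finset.range N, x n * Complex.exp (-Complex.I * (ω : ℂ) * (n : ℂ))
        = C * ∏ j ∈ Finset.range (N - 1), (Complex.exp (-Complex.I * (ω : ℂ)) - β j))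
    (y : ℤ → ℂ)
    (hysupp : ∀ n : ℤ, (n < 0 ∨ (N : ℤ) ≤ n) → y n = 0)
    (hint : ∀ ω : ℝ,
      ‖∑ n ∈ Finset.range N, y n * Complex.exp (-Complex.I * (ω : ℂ) * (n : ℂ))‖
        = ‖∑ n ∈ Finset.range N, x n * Complex.exp (-Complex.I * (ω : ℂ) * (n : ℂ))‖) :
    ∃ α : ℝ, ∀ n : ℤ, y n = Complex.exp (Complex.I * (α : ℂ)) * x n :=
  unique_up_to_rotation_of_unimodular_zeros_general N x hxsupp C hC β hβ hfact y hysupp hint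
end

section
/- For every integer N > 3 there exist two signals x and y, both with support {0,…,N-1}, such that |𝓕x(ω)| = |𝓕y(ω)| for all ω ∈ ℝ and |x[n]| = |y[n]| for all n ∈ ℤ, but y is not of the form e^{iα} x for any α ∈ ℝ. Explicitly, for η₁, η₂ real with η₁, η₂ > 1, take 𝓕x(ω) = (e^{-iω} - η₁)(e^{-iω} + η₁^{-1})(e^{-iω} - iη₂)^{N-3} and 𝓕y(ω) = (e^{-iω} - η₁^{-1})(e^{-iω} + η₁)(e^{-iω} - iη₂)^{N-3}. -/
/-!
Identify a signal supported on `{0, …, N-1}` with the polynomial `p` having it as coefficients,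
so that `𝓕x(ω) = p(e^{-iω})`. For `|z| = 1` one has `|z - a| = |a| |z - 1/conj a|`, so replacing
the roots `η, -1/η` of `p` by `1/η, -η` does not change `|p|` on the unit circle. Because these
roots are real and the remaining root `iη₂` lies on the imaginary axis, the new polynomial is
`±conj(p(-conj z))`, whose coefficients are `±(-1)ⁿ conj(pₙ)`; hence the signals also have equal
moduli. The two polynomials do not share the root `η`, so neither is a unimodular multiple of
the other.
-/

open Complex Polynomial

namespace Polynomial

variable {R : Type*}

noncomputable def coeffSignal [Semiring R] (p : R[X]) (n : ℤ) : R :=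
  if 0 ≤ n then p.coeff n.toNat else 0

@[simp]
lemma coeffSignal_natCast [Semiring R] (p : R[X]) (n : ℕ) : p.coeffSignal n = p.coeff n := by
  simp [coeffSignal]

lemma coeffSignal_eq_zero [Semiring R] {p : R[X]} {N : ℕ} (hp : p.natDegree < N) {n : ℤ}
    (hn : n < 0 ∨ (N : ℤ) ≤ n) : p.coeffSignal n = 0 := by
  rcases hn with hn | hn
  · exact if_neg (by omega)
  · rw [coeffSignal, if_pos (by omega)]
    exact coeff_eq_zero_of_natDegree_lt (by omega)

lemma eq_C_mul_of_coeffSignal_eq_mul [Semiring R] {p q : R[X]} {c : R}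
    (h : ∀ n, q.coeffSignal n = c * p.coeffSignal n) : q = C c * p := by
  ext n
  simpa using h n

lemma sum_range_coeffSignal_mul_pow [CommSemiring R] {p : R[X]} {N : ℕ} (hp : p.natDegree < N)
    (w : R) : ∑ n ∈ Finset.range N, p.coeffSignal n * w ^ n = p.eval w := by
  simp only [coeffSignal_natCast]
  exact (eval_eq_sum_range' hp w).symm

lemma sum_range_coeffSignal_mul_exp {p : ℂ[X]} {N : ℕ} (hp : p.natDegree < N) (ω : ℝ) :
    ∑ n ∈ Finset.range N, p.coeffSignal n * exp (-I * ω * n) = p.eval (exp (-I * ω)) := by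
  rw [← sum_range_coeffSignal_mul_pow hp]
  refine Finset.sum_congr rfl fun n _ => ?_
  rw [← Complex.exp_nat_mul, mul_comm (n : ℂ)]

lemma natDegree_X_sub_C_mul_X_add_C_mul_pow [CommRing R] [Nontrivial R]
    (a b c : R) (k : ℕ) : ((X - C a) * (X + C b) * (X - C c) ^ k).natDegree = k + 2 := by
  have ha := monic_X_sub_C a
  have hb := monic_X_add_C b
  rw [(ha.mul hb).natDegree_mul ((monic_X_sub_C c).pow k), ha.natDegree_mul hb,
    natDegree_X_sub_C, natDegree_X_add_C, (monic_X_sub_C c).natDegree_pow, natDegree_X_sub_C]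
  ring

lemma norm_coeffSignal_C_mul_map_conj_comp_neg_X (p : ℂ[X]) {u : ℂ} (hu : ‖u‖ = 1) (n : ℤ) :
    ‖(C u * (p.map (starRingEnd ℂ)).comp (-X)).coeffSignal n‖ = ‖p.coeffSignal n‖ := by
  unfold coeffSignal
  split_ifs
  · rw [coeff_C_mul, norm_mul, hu, one_mul, show (-X : ℂ[X]) = C (-1) * X by simp,
      comp_C_mul_X_coeff, coeff_map, norm_mul, norm_pow, norm_neg, norm_one, one_pow, mul_one,
      Complex.norm_conj]
  · rfl

end Polynomial

lemma Complex.norm_sub_eq_norm_mul_norm_sub_conj_inv {z a : ℂ} (hz : ‖z‖ = 1) (ha : a ≠ 0) :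
    ‖z - a‖ = ‖a‖ * ‖z - (starRingEnd ℂ a)⁻¹‖ := by
  have hz0 : z ≠ 0 := norm_ne_zero_iff.mp (by simp [hz])
  have hconj : starRingEnd ℂ z = z⁻¹ := (Complex.inv_eq_conj hz).symm
  have hfactor : z - a = -(a * z * (z⁻¹ - a⁻¹)) := by field_simp; ring
  rw [hfactor, ← Complex.norm_conj (z - _), map_sub, map_inv₀, Complex.conj_conj, hconj]
  simp [hz]

lemma Complex.norm_root_pair_flip {z : ℂ} (hz : ‖z‖ = 1) {a : ℝ} (ha : a ≠ 0) (w : ℂ) :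
    ‖(z - a) * (z + (a : ℂ)⁻¹) * w‖ = ‖(z - (a : ℂ)⁻¹) * (z + a) * w‖ := by
  have ha' : (a : ℂ) ≠ 0 := ofReal_ne_zero.mpr ha
  have h₁ := norm_sub_eq_norm_mul_norm_sub_conj_inv hz ha'
  have h₂ := norm_sub_eq_norm_mul_norm_sub_conj_inv hz (neg_ne_zero.mpr ha')
  simp only [map_neg, conj_ofReal, inv_neg, sub_neg_eq_add, norm_neg] at h₁ h₂
  simp only [norm_mul, h₁, h₂]
  ring

lemma root_pair_flip_eq_map_conj_comp_neg_X (a b : ℝ) (k : ℕ) :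
    (X - C (a : ℂ)⁻¹) * (X + C (a : ℂ)) * (X - C (I * b)) ^ k =
      C ((-1) ^ k) * (((X - C (a : ℂ)) * (X + C (a : ℂ)⁻¹) * (X - C (I * b)) ^ k).map
        (starRingEnd ℂ)).comp (-X) := by
  simp only [Polynomial.map_mul, Polynomial.map_pow, Polynomial.map_sub, Polynomial.map_add,
    map_X, map_C, mul_comp, pow_comp, sub_comp, add_comp, X_comp, C_comp, map_mul, conj_I,
    conj_ofReal, map_inv₀, neg_comp, C_neg, C_pow, C_1]
  have hsign : ((-1 : ℂ[X]) ^ k) * (-1) ^ k = 1 := by rw [← mul_pow]; simp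
  rw [show -X - -C I * C (b : ℂ) = -(X - C I * C (b : ℂ)) by ring, neg_pow (X - C I * C (b : ℂ))]
  linear_combination (-((X - C (a : ℂ)⁻¹) * (X + C (a : ℂ)) * (X - C I * C (b : ℂ)) ^ k)) * hsign

lemma root_pair_flip_ne_C_mul {a : ℝ} (ha₀ : a ≠ 0) (ha₁ : a ^ 2 ≠ 1) (b : ℝ) (k : ℕ) (c : ℂ) :
    (X - C (a : ℂ)⁻¹) * (X + C (a : ℂ)) * (X - C (I * b)) ^ k ≠
      C c * ((X - C (a : ℂ)) * (X + C (a : ℂ)⁻¹) * (X - C (I * b)) ^ k) := by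
  intro h
  have := congrArg (eval (a : ℂ)) h
  simp only [eval_mul, eval_pow, eval_sub, eval_add, eval_X, eval_C, sub_self, zero_mul,
    mul_zero, mul_eq_zero, pow_eq_zero_iff', add_self_eq_zero, ofReal_eq_zero] at this
  rcases this with (h | h) | ⟨h, -⟩
  · apply ha₁
    have h' : (a : ℂ) * (a - (a : ℂ)⁻¹) = 0 := by rw [h, mul_zero]
    rw [mul_sub, mul_inv_cancel₀ (ofReal_ne_zero.mpr ha₀)] at h'
    have : (a : ℂ) ^ 2 = 1 := by linear_combination h'
    exact_mod_cast this
  · exact ha₀ h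
  · apply ha₀
    simpa using congrArg re h

theorem nonuniqueness_with_full_moduli_general
    (N : ℕ) (hN : 3 < N) (η₁ η₂ : ℝ) (hη₁ : 1 < η₁) :
    ∃ x y : ℤ → ℂ,
      (∀ n : ℤ, (n < 0 ∨ (N : ℤ) ≤ n) → x n = 0) ∧
      (∀ n : ℤ, (n < 0 ∨ (N : ℤ) ≤ n) → y n = 0) ∧
      (∀ ω : ℝ,
        ∑ n ∈ Finset.range N, x n * Complex.exp (-Complex.I * (ω : ℂ) * (n : ℂ))
          = (Complex.exp (-Complex.I * (ω : ℂ)) - (η₁ : ℂ)) *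
            (Complex.exp (-Complex.I * (ω : ℂ)) + (η₁ : ℂ)⁻¹) *
            (Complex.exp (-Complex.I * (ω : ℂ)) - Complex.I * (η₂ : ℂ)) ^ (N - 3)) ∧
      (∀ ω : ℝ,
        ∑ n ∈ Finset.range N, y n * Complex.exp (-Complex.I * (ω : ℂ) * (n : ℂ))
          = (Complex.exp (-Complex.I * (ω : ℂ)) - (η₁ : ℂ)⁻¹) *
            (Complex.exp (-Complex.I * (ω : ℂ)) + (η₁ : ℂ)) *
            (Complex.exp (-Complex.I * (ω : ℂ)) - Complex.I * (η₂ : ℂ)) ^ (N - 3)) ∧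
      (∀ ω : ℝ,
        ‖∑ n ∈ Finset.range N, x n * Complex.exp (-Complex.I * (ω : ℂ) * (n : ℂ))‖
          = ‖∑ n ∈ Finset.range N, y n * Complex.exp (-Complex.I * (ω : ℂ) * (n : ℂ))‖) ∧
      (∀ n : ℤ, ‖x n‖ = ‖y n‖) ∧
      ¬ ∃ α : ℝ, ∀ n : ℤ, y n = Complex.exp (Complex.I * (α : ℂ)) * x n := by
  set p : ℂ[X] := (X - C (η₁ : ℂ)) * (X + C (η₁ : ℂ)⁻¹) * (X - C (I * η₂)) ^ (N - 3)
  set q : ℂ[X] := (X - C (η₁ : ℂ)⁻¹) * (X + C (η₁ : ℂ)) * (X - C (I * η₂)) ^ (N - 3) with hq_def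
  have hp : p.natDegree < N := by rw [natDegree_X_sub_C_mul_X_add_C_mul_pow]; omega
  have hq : q.natDegree < N := by rw [natDegree_X_sub_C_mul_X_add_C_mul_pow]; omega
  have hη₁₀ : η₁ ≠ 0 := by positivity
  have hFx (ω : ℝ) := sum_range_coeffSignal_mul_exp hp ω
  have hFy (ω : ℝ) := sum_range_coeffSignal_mul_exp hq ω
  simp only [p, q, eval_mul, eval_sub, eval_add, eval_pow, eval_X, eval_C] at hFx hFy
  refine ⟨p.coeffSignal, q.coeffSignal, fun _ => coeffSignal_eq_zero hp,
    fun _ => coeffSignal_eq_zero hq, hFx, hFy, fun ω => ?_, fun n => ?_, ?_⟩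
  · rw [hFx, hFy]
    exact norm_root_pair_flip (by simp [norm_exp]) hη₁₀ _
  · rw [hq_def, root_pair_flip_eq_map_conj_comp_neg_X,
      norm_coeffSignal_C_mul_map_conj_comp_neg_X _ (by simp)]
  · rintro ⟨α, hα⟩
    exact root_pair_flip_ne_C_mul hη₁₀ (by nlinarith) η₂ (N - 3) _
      (eq_C_mul_of_coeffSignal_eq_mul hα)

theorem nonuniqueness_with_full_moduli
    (N : ℕ) (hN : 3 < N) (η₁ η₂ : ℝ) (hη₁ : 1 < η₁) (hη₂ : 1 < η₂) :
    ∃ x y : ℤ → ℂ,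
      (∀ n : ℤ, (n < 0 ∨ (N : ℤ) ≤ n) → x n = 0) ∧
      (∀ n : ℤ, (n < 0 ∨ (N : ℤ) ≤ n) → y n = 0) ∧
      (∀ ω : ℝ,
        ∑ n ∈ Finset.range N, x n * Complex.exp (-Complex.I * (ω : ℂ) * (n : ℂ))
          = (Complex.exp (-Complex.I * (ω : ℂ)) - (η₁ : ℂ)) *
            (Complex.exp (-Complex.I * (ω : ℂ)) + (η₁ : ℂ)⁻¹) *
            (Complex.exp (-Complex.I * (ω : ℂ)) - Complex.I * (η₂ : ℂ)) ^ (N - 3)) ∧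
      (∀ ω : ℝ,
        ∑ n ∈ Finset.range N, y n * Complex.exp (-Complex.I * (ω : ℂ) * (n : ℂ))
          = (Complex.exp (-Complex.I * (ω : ℂ)) - (η₁ : ℂ)⁻¹) *
            (Complex.exp (-Complex.I * (ω : ℂ)) + (η₁ : ℂ)) *
            (Complex.exp (-Complex.I * (ω : ℂ)) - Complex.I * (η₂ : ℂ)) ^ (N - 3)) ∧
      (∀ ω : ℝ,
        ‖∑ n ∈ Finset.range N, x n * Complex.exp (-Complex.I * (ω : ℂ) * (n : ℂ))‖
          = ‖∑ n ∈ Finset.range N, y n * Complex.exp (-Complex.I * (ω : ℂ) * (n : ℂ))‖) ∧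
      (∀ n : ℤ, ‖x n‖ = ‖y n‖) ∧
      ¬ ∃ α : ℝ, ∀ n : ℤ, y n = Complex.exp (Complex.I * (α : ℂ)) * x n :=
  nonuniqueness_with_full_moduli_general N hN η₁ η₂ hη₁
end

section
/- Let S_ℓ denote the ℓ-th elementary symmetric polynomial in N-1 complex variables, and fix ℓ with 1 ≤ ℓ + J ≤ N-1 and J ≥ 1. Consider the map sending (β_1,…,β_{N-1}) ∈ (ℂ\{0})^{N-1} to p(β) := |S_ℓ(β_1,…,β_{N-1})|² − |conj(β_1)⋯conj(β_J)|² · |S_ℓ(1/conj(β_1),…,1/conj(β_J),β_{J+1},…,β_{N-1})|², viewed as a real polynomial in the 2N-2 real variables Re β_j, Im β_j after clearing denominators. If ℓ ≠ (N-1)/2, or if ℓ = (N-1)/2 and J ≤ N-2, then this polynomial is not identically zero. -/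
open Complex

/-- The ℓ-th elementary symmetric polynomial of the values β j, j ∈ {0,…,m-1}. -/
noncomputable def esymm (m : ℕ) (β : ℕ → ℂ) (ℓ : ℕ) : ℂ :=
  ∑ t ∈ (Finset.range m).powersetCard ℓ, ∏ j ∈ t, β j

/-- The difference of squared moduli appearing in the uniqueness condition when
the zeros indexed by {0,…,J-1} are reflected at the unit circle. -/
noncomputable def modDiff (N ℓ J : ℕ) (β : ℕ → ℂ) : ℝ :=
  (‖esymm (N - 1) β ℓ‖) ^ 2 -
    ((∏ j ∈ Finset.range J, ‖β j‖) ^ 2 *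
      (‖esymm (N - 1)
        (fun j => if j < J then 1 / (starRingEnd ℂ) (β j) else β j) ℓ‖) ^ 2)

theorem modulus_condition_not_identically_zero
    (N ℓ J : ℕ) (hJ : 1 ≤ J) (hlow : 1 ≤ ℓ + J) (hup : ℓ + J ≤ N - 1)
    (hcase : 2 * ℓ ≠ N - 1 ∨ J ≤ N - 2) :
    ∃ β : ℕ → ℂ, (∀ j < N - 1, β j ≠ 0) ∧ modDiff N ℓ J β ≠ 0 := by
  set n := N - 1 with hn
  set c : ℝ := (n.choose ℓ : ℝ) with hc
  set t : ℝ := c + 1 with ht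
  have hln : ℓ ≤ n := le_trans (Nat.le_add_right ℓ J) hup
  have hc1 : (1:ℝ) ≤ c := by
    have := Nat.choose_pos hln
    rw [hc]; exact_mod_cast this
  have ht0 : (0:ℝ) < t := by linarith
  have ht1 : (1:ℝ) ≤ t := by linarith
  have habsβ : ‖((t:ℂ))‖ = t := by
    rw [Complex.norm_real, Real.norm_eq_abs, abs_of_pos ht0]
  -- first esymm
  have hA : esymm n (fun _ => (t:ℂ)) ℓ = ((c * t ^ ℓ : ℝ) : ℂ) := by
    unfold esymm
    rw [Finset.sum_congr rfl (fun s hs => by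
      rw [Finset.prod_const, (Finset.mem_powersetCard.mp hs).2])]
    rw [Finset.sum_const, Finset.card_powersetCard, Finset.card_range]
    push_cast [hc]
    ring
  -- the reflected values, as reals
  set w : ℕ → ℝ := fun j => if j < J then 1/t else t with hw
  have hwpos : ∀ j, 0 < w j := by
    intro j; rw [hw]; dsimp only; split_ifs
    · positivity
    · exact ht0
  set R : ℝ := ∑ s ∈ (Finset.range n).powersetCard ℓ, ∏ j ∈ s, w j with hRdef
  have hfun : (fun j => if j < J then 1 / (starRingEnd ℂ) ((t:ℂ)) else ((t:ℂ)))
      = fun j => ((w j : ℝ) : ℂ) := by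
    funext j
    rw [hw]
    dsimp only
    split_ifs
    · rw [Complex.conj_ofReal]; push_cast; ring
    · rfl
  have hB : esymm n (fun j => if j < J then 1 / (starRingEnd ℂ) ((t:ℂ)) else ((t:ℂ))) ℓ
      = ((R : ℝ) : ℂ) := by
    rw [hfun]
    unfold esymm
    rw [hRdef]
    push_cast
    rfl
  -- lower bound on R
  have hmem : Finset.Ico J (J + ℓ) ∈ (Finset.range n).powersetCard ℓ := by
    rw [Finset.mem_powersetCard]
    constructor
    · intro x hx
      rw [Finset.mem_range]
      have := (Finset.mem_Ico.mp hx).2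
      omega
    · rw [Nat.card_Ico]; omega
  have hprod : ∏ j ∈ Finset.Ico J (J + ℓ), w j = t ^ ℓ := by
    have hjw : ∀ j ∈ Finset.Ico J (J + ℓ), w j = t := fun j hj => by
      rw [hw]; exact if_neg (Nat.not_lt.mpr (Finset.mem_Ico.mp hj).1)
    rw [Finset.prod_congr rfl hjw, Finset.prod_const]
    congr 1
    rw [Nat.card_Ico]
    omega
  have hR : t ^ ℓ ≤ R := by
    rw [hRdef, ← hprod]
    exact Finset.single_le_sum (f := fun s => ∏ j ∈ s, w j)
      (fun s _ => Finset.prod_nonneg fun j _ => (hwpos j).le) hmem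
  have hR0 : (0:ℝ) ≤ R := le_trans (by positivity) hR
  refine ⟨fun _ => (t:ℂ), fun j _ => Complex.ofReal_ne_zero.mpr (ne_of_gt ht0), ?_⟩
  have key : modDiff N ℓ J (fun _ => (t:ℂ)) = (c * t ^ ℓ) ^ 2 - (t ^ J) ^ 2 * R ^ 2 := by
    unfold modDiff
    rw [← hn, hA, hB, Finset.prod_congr rfl (fun j _ => habsβ), Finset.prod_const,
      Finset.card_range, Complex.norm_real, Complex.norm_real, Real.norm_eq_abs, Real.norm_eq_abs,
      _root_.abs_of_nonneg (show (0:ℝ) ≤ c * t ^ ℓ by positivity), _root_.abs_of_nonneg hR0]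
  rw [key]
  have htJ : t ≤ t ^ J := by
    calc t = t ^ 1 := (pow_one t).symm
    _ ≤ t ^ J := pow_le_pow_right₀ ht1 hJ
  have h1 : (c * t ^ ℓ) ^ 2 < (t * t ^ ℓ) ^ 2 := by
    have htl : (0:ℝ) < t ^ ℓ := by positivity
    have : c * t ^ ℓ < t * t ^ ℓ := by nlinarith
    exact pow_lt_pow_left₀ this (by positivity) (by norm_num)
  have h2 : (t * t ^ ℓ) ^ 2 ≤ (t ^ J * R) ^ 2 := by
    apply pow_le_pow_left₀ (by positivity)
    exact mul_le_mul htJ hR (by positivity) (by positivity)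
  rw [mul_pow] at h2
  exact ne_of_lt (by linarith)
end
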